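/- Let σ > 0, set λ₁ := π/(2σ), and let K_t(s) be as defined in the context. Suppose δ ∈ (0, σ), ℓ ∈ {0, 1}, and j ≥ 0 is an integer. Then there exists a constant C > 0 such that |∂_t^ℓ ∂_s^j K_t(s)| ≤ C · e^{−λ₁|s|} for every (s,t) ∈ S_δ. -/

import Mathlib

open Real

/-- The Poisson-type kernel `K_t(s)` for the slice `N × (0, 2σ)`:
`K_t(s) = (2π/σ) · sin(πt/(2σ)) cosh(πs/(2σ)) / (cosh(πs/σ) − cos(πt/σ))`. -/
noncomputable def sliceKernel (σ t s : ℝ) : ℝ :=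
  (2 * π / σ) * (Real.sin (π * t / (2 * σ)) * Real.cosh (π * s / (2 * σ)) /
    (Real.cosh (π * s / σ) - Real.cos (π * t / σ)))

/-!
On the slice, `K_t(s) = Im F(s + i t)` for the meromorphic function
`F(w) = -(π/σ) / sinh(λ₁ w)`, whose poles `2σℤ·i` avoid the strip `0 < Im w < 2σ`. Hence
`∂_s^j K = Im F^{(j)}` and `∂_t ∂_s^j K = Re F^{(j+1)}` there, and it suffices to bound
`F^{(j+ℓ)}(s + i t)`. For `(s,t) ∈ S_δ` the closed disc of radius `δ/2` about `s + i t` keeps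
a fixed distance from the poles, and on it `|sinh(λ₁ w)| ≥ c e^{λ₁ |Re w|} ≥ c' e^{λ₁ |s|}`.
Cauchy's estimate on that disc gives `|F^{(j+ℓ)}(s + i t)| ≤ C e^{-λ₁ |s|}`.
-/

theorem Real.sin_le_sin_of_le_of_le_pi_sub {α θ : ℝ} (hα₀ : -(π / 2) ≤ α) (hαθ : α ≤ θ)
    (hθ : θ ≤ π - α) : sin α ≤ sin θ := by
  rcases le_total θ (π / 2) with h | h
  · exact sin_le_sin_of_le_of_le_pi_div_two (by linarith) h hαθ
  · rw [← sin_pi_sub θ]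
    exact sin_le_sin_of_le_of_le_pi_div_two (by linarith) (by linarith) (by linarith)

theorem Real.mul_exp_le_sinh {u₀ u : ℝ} (h : u₀ ≤ u) :
    (1 - exp (-(2 * u₀))) / 2 * exp u ≤ sinh u := by
  have h1 : exp (-u) = exp u * exp (-(2 * u)) := by rw [← exp_add]; ring_nf
  have h2 : exp (-(2 * u)) ≤ exp (-(2 * u₀)) := exp_le_exp.2 (by linarith)
  rw [sinh_eq, h1]
  nlinarith [exp_pos u]

namespace Complex

theorem sinh_eq_re_add_im (z : ℂ) :
    sinh z = (Real.sinh z.re * Real.cos z.im : ℝ) + (Real.cosh z.re * Real.sin z.im : ℝ) * I := by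
  conv_lhs => rw [← re_add_im z]
  rw [sinh_add, sinh_mul_I, cosh_mul_I]
  push_cast
  ring

theorem sinh_re (z : ℂ) : (sinh z).re = Real.sinh z.re * Real.cos z.im := by
  rw [sinh_eq_re_add_im]
  simp only [add_re, mul_re, ofReal_re, ofReal_im, I_re, I_im]
  ring

theorem sinh_im (z : ℂ) : (sinh z).im = Real.cosh z.re * Real.sin z.im := by
  rw [sinh_eq_re_add_im]
  simp only [add_im, mul_im, ofReal_re, ofReal_im, I_re, I_im]
  ring

theorem norm_sinh_sq (z : ℂ) : ‖sinh z‖ ^ 2 = Real.sinh z.re ^ 2 + Real.sin z.im ^ 2 := by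
  rw [Complex.sq_norm, normSq_apply, sinh_re, sinh_im]
  nlinarith [Real.sin_sq_add_cos_sq z.im, Real.cosh_sq z.re]

theorem abs_sinh_re_le_norm_sinh (z : ℂ) : |Real.sinh z.re| ≤ ‖sinh z‖ :=
  abs_le_of_sq_le_sq (by rw [norm_sinh_sq]; nlinarith [sq_nonneg (Real.sin z.im)]) (norm_nonneg _)

theorem abs_sin_im_le_norm_sinh (z : ℂ) : |Real.sin z.im| ≤ ‖sinh z‖ :=
  abs_le_of_sq_le_sq (by rw [norm_sinh_sq]; nlinarith [sq_nonneg (Real.sinh z.re)]) (norm_nonneg _)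

theorem exists_mul_exp_abs_re_le_norm_sinh {r : ℝ} (hr : 0 < r) (hrπ : r ≤ π) :
    ∃ c > 0, ∀ z : ℂ, r ≤ ‖z‖ → |z.im| ≤ π - r → c * Real.exp |z.re| ≤ ‖sinh z‖ := by
  set c₁ := (1 - Real.exp (-(2 * (r / 2)))) / 2
  set c₂ := Real.sin (r / 2) * Real.exp (-(r / 2))
  have hc₁ : 0 < c₁ :=
    half_pos (sub_pos.2 (Real.exp_lt_one_iff.2 (by linarith)))
  have hc₂ : 0 < c₂ :=
    mul_pos (Real.sin_pos_of_pos_of_lt_pi (by linarith) (by linarith)) (Real.exp_pos _)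
  refine ⟨min c₁ c₂, lt_min hc₁ hc₂, fun z hz him => ?_⟩
  rcases le_total (r / 2) |z.re| with hre | hre
  · calc min c₁ c₂ * Real.exp |z.re| ≤ c₁ * Real.exp |z.re| := by gcongr; exact min_le_left _ _
      _ ≤ Real.sinh |z.re| := Real.mul_exp_le_sinh hre
      _ = |Real.sinh z.re| := (Real.abs_sinh _).symm
      _ ≤ ‖sinh z‖ := abs_sinh_re_le_norm_sinh z
  · have him' : r / 2 ≤ |z.im| := by
      have hz2 : r ^ 2 ≤ |z.re| ^ 2 + |z.im| ^ 2 := by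
        calc r ^ 2 ≤ ‖z‖ ^ 2 := by gcongr
          _ = |z.re| ^ 2 + |z.im| ^ 2 := by rw [sq_abs, sq_abs, Complex.sq_norm, normSq_apply]; ring
      nlinarith [abs_nonneg z.re, abs_nonneg z.im]
    calc min c₁ c₂ * Real.exp |z.re| ≤ c₂ * Real.exp (r / 2) := by
          gcongr
          exact min_le_right _ _
      _ = Real.sin (r / 2) := by rw [mul_assoc, ← Real.exp_add]; simp
      _ ≤ Real.sin |z.im| := Real.sin_le_sin_of_le_of_le_pi_sub (by linarith) him' (by linarith)
      _ = |Real.sin z.im| := (abs_sin_eq_sin_abs_of_abs_le_pi (by linarith)).symm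
      _ ≤ ‖sinh z‖ := abs_sin_im_le_norm_sinh z

end Complex

theorem hasDerivAt_im_comp_ofReal_add {f : ℂ → ℂ} {c : ℂ} {x : ℝ}
    (hf : DifferentiableAt ℂ f (x + c)) :
    HasDerivAt (fun y : ℝ => (f (y + c)).im) (deriv f (x + c)).im x := by
  have h : HasDerivAt (fun w : ℂ => f (w + c)) (deriv f (x + c)) x :=
    hf.hasDerivAt.comp_add_const (x : ℂ) c
  exact Complex.imCLM.hasFDerivAt.comp_hasDerivAt x h.comp_ofReal

theorem hasDerivAt_im_comp_add_ofReal_mul_I {f : ℂ → ℂ} {c : ℂ} {y : ℝ}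
    (hf : DifferentiableAt ℂ f (c + y * Complex.I)) :
    HasDerivAt (fun y' : ℝ => (f (c + y' * Complex.I)).im) (deriv f (c + y * Complex.I)).re y := by
  have hline : HasDerivAt (fun w : ℂ => c + w * Complex.I) Complex.I y := by
    simpa using ((hasDerivAt_id (y : ℂ)).mul_const Complex.I).const_add c
  have h := (hf.hasDerivAt.comp (y : ℂ) hline).comp_ofReal
  exact (Complex.imCLM.hasFDerivAt.comp_hasDerivAt y h).congr_deriv (by simp)

theorem iteratedDeriv_im_comp_ofReal_add {f : ℂ → ℂ} {c : ℂ}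
    (hf : ∀ x : ℝ, AnalyticAt ℂ f (x + c)) (n : ℕ) :
    iteratedDeriv n (fun x : ℝ => (f (x + c)).im) =
      fun x : ℝ => (iteratedDeriv n f (x + c)).im := by
  induction n with
  | zero => simp
  | succ n ih =>
    ext x
    rw [iteratedDeriv_succ, ih, iteratedDeriv_succ]
    refine (hasDerivAt_im_comp_ofReal_add ?_).deriv
    rw [iteratedDeriv_eq_iterate]
    exact ((hf x).iterated_deriv n).differentiableAt

noncomputable def complexSliceKernel (σ : ℝ) (w : ℂ) : ℂ :=
  -(π / σ : ℝ) * (Complex.sinh ((π / (2 * σ) : ℝ) * w))⁻¹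

theorem sliceKernel_eq_im (σ t s : ℝ) :
    sliceKernel σ t s = (complexSliceKernel σ (s + t * Complex.I)).im := by
  set a := π / (2 * σ) with ha
  have hw : (a : ℂ) * (s + t * Complex.I) = (a * s : ℝ) + (a * t : ℝ) * Complex.I := by
    push_cast; ring
  have hden : Real.cosh (π * s / σ) - Real.cos (π * t / σ) =
      2 * (Real.sinh (a * s) ^ 2 + Real.sin (a * t) ^ 2) := by
    rw [show π * s / σ = 2 * (a * s) by rw [ha]; ring,
      show π * t / σ = 2 * (a * t) by rw [ha]; ring, Real.cosh_two_mul, Real.cos_two_mul,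
      Real.cosh_sq]
    linarith [Real.sin_sq_add_cos_sq (a * t)]
  have him : (complexSliceKernel σ (s + t * Complex.I)).im =
      π / σ * (Real.cosh (a * s) * Real.sin (a * t)) /
        (Real.sinh (a * s) ^ 2 + Real.sin (a * t) ^ 2) := by
    rw [complexSliceKernel, hw, ← Complex.ofReal_neg, Complex.im_ofReal_mul, Complex.inv_im,
      ← Complex.sq_norm, Complex.norm_sinh_sq, Complex.sinh_im]
    simp only [Complex.add_re, Complex.add_im, Complex.ofReal_re, Complex.ofReal_im,
      Complex.mul_I_re, Complex.mul_I_im, neg_zero, add_zero, zero_add]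
    ring
  rw [sliceKernel, hden, him, show π * t / (2 * σ) = a * t by rw [ha]; ring,
    show π * s / (2 * σ) = a * s by rw [ha]; ring]
  generalize Real.sinh (a * s) ^ 2 + Real.sin (a * t) ^ 2 = B
  ring

theorem analyticAt_complexSliceKernel {σ : ℝ} {w : ℂ}
    (hw : Complex.sinh ((π / (2 * σ) : ℝ) * w) ≠ 0) : AnalyticAt ℂ (complexSliceKernel σ) w := by
  unfold complexSliceKernel
  fun_prop (disch := exact hw)

theorem analyticAt_complexSliceKernel_ofReal_add_mul_I {σ t : ℝ} (hσ : 0 < σ) (ht₀ : 0 < t)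
    (ht : t < 2 * σ) (x : ℝ) : AnalyticAt ℂ (complexSliceKernel σ) (x + t * Complex.I) := by
  refine analyticAt_complexSliceKernel fun h => ?_
  have him := congrArg Complex.im h
  rw [Complex.sinh_im, Complex.zero_im, Complex.re_ofReal_mul, Complex.im_ofReal_mul] at him
  simp only [Complex.add_re, Complex.add_im, Complex.ofReal_re, Complex.ofReal_im,
    Complex.mul_I_re, Complex.mul_I_im, neg_zero, add_zero, zero_add] at him
  have hsin : 0 < Real.sin (π / (2 * σ) * t) := by
    apply Real.sin_pos_of_pos_of_lt_pi (by positivity)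
    rw [div_mul_eq_mul_div, div_lt_iff₀ (by positivity)]
    nlinarith [Real.pi_pos]
  exact (mul_pos (Real.cosh_pos _) hsin).ne' him

theorem iteratedDeriv_sliceKernel {σ t : ℝ} (hσ : 0 < σ) (ht₀ : 0 < t) (ht : t < 2 * σ) (j : ℕ) :
    iteratedDeriv j (fun s => sliceKernel σ t s) =
      fun s : ℝ => (iteratedDeriv j (complexSliceKernel σ) (s + t * Complex.I)).im := by
  simp_rw [sliceKernel_eq_im]
  exact iteratedDeriv_im_comp_ofReal_add
    (analyticAt_complexSliceKernel_ofReal_add_mul_I hσ ht₀ ht) j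

theorem abs_iteratedDeriv_iteratedDeriv_sliceKernel_le {σ s t : ℝ} (hσ : 0 < σ) (ht₀ : 0 < t)
    (ht : t < 2 * σ) {ℓ : ℕ} (hℓ : ℓ ≤ 1) (j : ℕ) :
    |iteratedDeriv ℓ (fun t' => iteratedDeriv j (fun s' => sliceKernel σ t' s') s) t| ≤
      ‖iteratedDeriv (j + ℓ) (complexSliceKernel σ) (s + t * Complex.I)‖ := by
  interval_cases ℓ
  · rw [iteratedDeriv_zero, iteratedDeriv_sliceKernel hσ ht₀ ht]
    exact Complex.abs_im_le_norm _
  · have hnear : (fun t' => iteratedDeriv j (fun s' => sliceKernel σ t' s') s) =ᶠ[nhds t]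
        fun t' => (iteratedDeriv j (complexSliceKernel σ) (s + t' * Complex.I)).im := by
      filter_upwards [Ioo_mem_nhds ht₀ ht] with t' ht'
      rw [iteratedDeriv_sliceKernel hσ ht'.1 ht'.2]
    have hdiff :
        DifferentiableAt ℂ (iteratedDeriv j (complexSliceKernel σ)) (s + t * Complex.I) := by
      rw [iteratedDeriv_eq_iterate]
      exact ((analyticAt_complexSliceKernel_ofReal_add_mul_I hσ ht₀ ht s).iterated_deriv
        j).differentiableAt
    rw [iteratedDeriv_one, hnear.deriv_eq, (hasDerivAt_im_comp_add_ofReal_mul_I hdiff).deriv,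
      ← iteratedDeriv_succ]
    exact Complex.abs_re_le_norm _

theorem exists_mul_exp_le_norm_sinh_of_mem_closedBall {σ δ : ℝ} (hσ : 0 < σ) (hδ₀ : 0 < δ)
    (hδ : δ < σ) :
    ∃ c > 0, ∀ s t : ℝ, t ∈ Set.Ioc 0 σ → δ ^ 2 ≤ s ^ 2 + t ^ 2 →
      ∀ w ∈ Metric.closedBall ((s : ℂ) + t * Complex.I) (δ / 2),
        c * Real.exp (π / (2 * σ) * |s|) ≤ ‖Complex.sinh ((π / (2 * σ) : ℝ) * w)‖ := by
  set a := π / (2 * σ) with ha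
  have ha₀ : 0 < a := by positivity
  have haσ : a * σ = π / 2 := by rw [ha]; field_simp
  obtain ⟨c, hc, hsinh⟩ := Complex.exists_mul_exp_abs_re_le_norm_sinh (r := a * (δ / 2))
    (by positivity) (by nlinarith [Real.pi_pos])
  refine ⟨c * Real.exp (-(a * (δ / 2))), by positivity, fun s t ht hst w hw => ?_⟩
  set z : ℂ := s + t * Complex.I with hz
  have hwz : ‖w - z‖ ≤ δ / 2 := by rwa [Metric.mem_closedBall, dist_eq_norm] at hw
  have hzδ : δ ≤ ‖z‖ := by
    rw [← pow_le_pow_iff_left₀ hδ₀.le (norm_nonneg z) two_ne_zero, Complex.sq_norm, hz,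
      Complex.normSq_add_mul_I]
    exact hst
  have hre : |s| - δ / 2 ≤ |w.re| := by
    have h := Complex.abs_re_le_norm (w - z)
    simp only [hz, Complex.sub_re, Complex.add_re, Complex.ofReal_re, Complex.mul_I_re,
      Complex.ofReal_im, neg_zero, add_zero] at h
    linarith [abs_sub_abs_le_abs_sub s w.re, abs_sub_comm s w.re]
  have him : |w.im| ≤ 2 * σ - δ / 2 := by
    have h := Complex.abs_im_le_norm (w - z)
    simp only [hz, Complex.sub_im, Complex.add_im, Complex.ofReal_im, Complex.mul_I_im,
      Complex.ofReal_re, zero_add] at h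
    rw [abs_le] at h ⊢
    constructor <;> linarith [ht.1, ht.2]
  have hnorm : a * (δ / 2) ≤ ‖(a : ℂ) * w‖ := by
    rw [norm_mul, Complex.norm_real, Real.norm_of_nonneg ha₀.le]
    gcongr
    linarith [norm_sub_norm_le z w, norm_sub_rev z w]
  have himw : |((a : ℂ) * w).im| ≤ π - a * (δ / 2) := by
    rw [Complex.im_ofReal_mul, abs_mul, abs_of_pos ha₀]
    nlinarith
  calc c * Real.exp (-(a * (δ / 2))) * Real.exp (a * |s|)
      = c * Real.exp (a * (|s| - δ / 2)) := by rw [mul_assoc, ← Real.exp_add]; ring_nf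
    _ ≤ c * Real.exp |((a : ℂ) * w).re| := by
      rw [Complex.re_ofReal_mul, abs_mul, abs_of_pos ha₀]
      gcongr
    _ ≤ ‖Complex.sinh ((a : ℂ) * w)‖ := hsinh _ hnorm himw

theorem norm_complexSliceKernel_le {σ c x : ℝ} {w : ℂ} (hσ : 0 < σ) (hc : 0 < c)
    (h : c * Real.exp (π / (2 * σ) * x) ≤ ‖Complex.sinh ((π / (2 * σ) : ℝ) * w)‖) :
    ‖complexSliceKernel σ w‖ ≤ π / σ / c * Real.exp (-(π / (2 * σ)) * x) := by
  rw [complexSliceKernel, norm_mul, norm_neg, Complex.norm_real, norm_inv,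
    Real.norm_of_nonneg (by positivity)]
  calc π / σ * ‖Complex.sinh ((π / (2 * σ) : ℝ) * w)‖⁻¹
      ≤ π / σ * (c * Real.exp (π / (2 * σ) * x))⁻¹ := by gcongr
    _ = π / σ / c * Real.exp (-(π / (2 * σ)) * x) := by
      rw [mul_inv, ← Real.exp_neg]; ring_nf

/-- For `δ ∈ (0, σ)`, `ℓ ∈ {0,1}` and a nonnegative integer `j`, the mixed derivatives of
the kernel satisfy `|∂_t^ℓ ∂_s^j K_t(s)| ≤ C e^{−λ₁ |s|}` on
`S_δ = {(s,t) ∈ ℝ × (0,σ] : s² + t² ≥ δ²}`, where `λ₁ = π/(2σ)`. -/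
theorem sliceKernel_mixed_deriv_bound (σ : ℝ) (hσ : 0 < σ) (δ : ℝ)
    (hδ : δ ∈ Set.Ioo 0 σ) (ℓ j : ℕ) (hℓ : ℓ ≤ 1) :
    ∃ C : ℝ, 0 < C ∧ ∀ s t : ℝ, t ∈ Set.Ioc 0 σ → δ ^ 2 ≤ s ^ 2 + t ^ 2 →
      |iteratedDeriv ℓ (fun t' => iteratedDeriv j (fun s' => sliceKernel σ t' s') s) t| ≤
        C * Real.exp (-(π / (2 * σ)) * |s|) := by
  obtain ⟨c, hc, hsinh⟩ := exists_mul_exp_le_norm_sinh_of_mem_closedBall hσ hδ.1 hδ.2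
  refine ⟨(j + ℓ).factorial * (π / σ / c) / (δ / 2) ^ (j + ℓ),
    by have := hδ.1; positivity, fun s t ht hst => ?_⟩
  have hdiff : DifferentiableOn ℂ (complexSliceKernel σ)
      (Metric.closedBall (s + t * Complex.I) (δ / 2)) := fun w hw =>
    have hpos : 0 < ‖Complex.sinh ((π / (2 * σ) : ℝ) * w)‖ :=
      lt_of_lt_of_le (by positivity) (hsinh s t ht hst w hw)
    (analyticAt_complexSliceKernel (norm_pos_iff.1 hpos)).differentiableWithinAt
  calc _ ≤ ‖iteratedDeriv (j + ℓ) (complexSliceKernel σ) (s + t * Complex.I)‖ :=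
        abs_iteratedDeriv_iteratedDeriv_sliceKernel_le hσ ht.1 (by linarith [ht.2]) hℓ j
    _ ≤ (j + ℓ).factorial * (π / σ / c * Real.exp (-(π / (2 * σ)) * |s|)) / (δ / 2) ^ (j + ℓ) :=
        Complex.norm_iteratedDeriv_le_of_forall_mem_sphere_norm_le _ (half_pos hδ.1)
          (hdiff.diffContOnCl_ball subset_rfl) fun w hw => norm_complexSliceKernel_le hσ hc
            (hsinh s t ht hst w (Metric.sphere_subset_closedBall hw))
    _ = _ := by ring
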